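/- arXiv:0808.3077 — 13 statements merged into one kernel-verified Lean document; each statement's English description precedes it below -/
import Mathlib

section
/- If μ satisfies (μ⊆) and the domain is closed under set difference, and μ satisfies (μOR) (μ(X ∪ Y) ⊆ μ(X) ∪ μ(Y)), then μ satisfies (μPR): X ⊆ Y implies μ(Y) ∩ X ⊆ μ(X). -/
/-! Write `Y = X ∪ (Y \ X)`. By (μOR) every point of `μ Y` lies in `μ X` or in `μ (Y \ X)`,
and by (μ⊆) the latter is disjoint from `X`. -/

open Set

theorem inter_subset_of_subset_union_diff {α : Type*} {μ : Set α → Set α} {X Y : Set α}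
    (hXY : X ⊆ Y) (hOR : μ (X ∪ Y \ X) ⊆ μ X ∪ μ (Y \ X)) (hSub : μ (Y \ X) ⊆ Y \ X) :
    μ Y ∩ X ⊆ μ X := by
  rw [union_sdiff_cancel hXY] at hOR
  rintro a ⟨haY, haX⟩
  rcases hOR haY with h | h
  · exact h
  · exact absurd haX (hSub h).2

/-- (μ⊆) + closure under set difference + (μOR) imply (μPR). -/
theorem stmt_1 {α : Type*} (𝒴 : Set (Set α)) (μ : Set α → Set α)
    (hDiff : ∀ X ∈ 𝒴, ∀ Y ∈ 𝒴, X \ Y ∈ 𝒴)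
    (hSub : ∀ X ∈ 𝒴, μ X ⊆ X)
    (hOR : ∀ X ∈ 𝒴, ∀ Y ∈ 𝒴, X ∪ Y ∈ 𝒴 → μ (X ∪ Y) ⊆ μ X ∪ μ Y) :
    ∀ X ∈ 𝒴, ∀ Y ∈ 𝒴, X ⊆ Y → μ Y ∩ X ⊆ μ X := by
  intro X hX Y hY hXY
  have hYX : Y \ X ∈ 𝒴 := hDiff Y hY X hX
  have hU : X ∪ Y \ X ∈ 𝒴 := by rwa [union_sdiff_cancel hXY]
  exact inter_subset_of_subset_union_diff hXY (hOR X hX _ hYX hU) (hSub _ hYX)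
end

section
/- If μ satisfies (μCM) (cautious monotony: μ(X) ⊆ Y ⊆ X implies μ(Y) ⊆ μ(X)), (μ⊆), and the domain is closed under finite intersections, then μ satisfies (μResM): μ(X) ⊆ A ∩ B implies μ(X ∩ A) ⊆ B. -/
theorem stmt_3_general {α : Type*} (𝒴 : Set (Set α)) (μ : Set α → Set α)
    (hSub : ∀ X ∈ 𝒴, μ X ⊆ X)
    (hCM : ∀ X ∈ 𝒴, ∀ Y ∈ 𝒴, μ X ⊆ Y → Y ⊆ X → μ Y ⊆ μ X) :
    ∀ X ∈ 𝒴, ∀ A B : Set α, X ∩ A ∈ 𝒴 → μ X ⊆ A ∩ B → μ (X ∩ A) ⊆ B := by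
  intro X hX A B hXA hμ
  have hμ_sub_XA : μ X ⊆ X ∩ A :=
    Set.subset_inter (hSub X hX) (hμ.trans Set.inter_subset_left)
  have hμ_XA_sub : μ (X ∩ A) ⊆ μ X := hCM X hX (X ∩ A) hXA hμ_sub_XA Set.inter_subset_left
  exact hμ_XA_sub.trans (hμ.trans Set.inter_subset_right)

/-- (μCM) + (μ⊆) + closure under finite intersections imply (μResM). -/
theorem stmt_3 {α : Type*} (𝒴 : Set (Set α)) (μ : Set α → Set α)
    (hInter : ∀ X ∈ 𝒴, ∀ Y ∈ 𝒴, X ∩ Y ∈ 𝒴)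
    (hSub : ∀ X ∈ 𝒴, μ X ⊆ X)
    (hCM : ∀ X ∈ 𝒴, ∀ Y ∈ 𝒴, μ X ⊆ Y → Y ⊆ X → μ Y ⊆ μ X) :
    ∀ X ∈ 𝒴, ∀ A B : Set α, X ∩ A ∈ 𝒴 → μ X ⊆ A ∩ B → μ (X ∩ A) ⊆ B :=
  stmt_3_general 𝒴 μ hSub hCM
end

section
/- If μ satisfies (μ⊆), (μCUM), and the domain is closed under finite intersections, then μ satisfies (μ⊆⊇): μ(X) ⊆ Y and μ(Y) ⊆ X imply μ(X) = μ(Y). -/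
theorem map_eq_map_inter_of_map_subset {α : Type*} (𝒴 : Set (Set α)) (μ : Set α → Set α)
    (hSub : ∀ X ∈ 𝒴, μ X ⊆ X)
    (hCUM : ∀ X ∈ 𝒴, ∀ Y ∈ 𝒴, μ X ⊆ Y → Y ⊆ X → μ X = μ Y)
    {X Y : Set α} (hX : X ∈ 𝒴) (hXY : X ∩ Y ∈ 𝒴) (hμXY : μ X ⊆ Y) :
    μ X = μ (X ∩ Y) :=
  hCUM X hX (X ∩ Y) hXY (Set.subset_inter (hSub X hX) hμXY) Set.inter_subset_left

/-- (μ⊆) + (μCUM) + closure under finite intersections imply (μ⊆⊇). -/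
theorem stmt_6 {α : Type*} (𝒴 : Set (Set α)) (μ : Set α → Set α)
    (hInter : ∀ X ∈ 𝒴, ∀ Y ∈ 𝒴, X ∩ Y ∈ 𝒴)
    (hSub : ∀ X ∈ 𝒴, μ X ⊆ X)
    (hCUM : ∀ X ∈ 𝒴, ∀ Y ∈ 𝒴, μ X ⊆ Y → Y ⊆ X → μ X = μ Y) :
    ∀ X ∈ 𝒴, ∀ Y ∈ 𝒴, μ X ⊆ Y → μ Y ⊆ X → μ X = μ Y := by
  intro X hX Y hY hμXY hμYX
  calc μ X = μ (X ∩ Y) := map_eq_map_inter_of_map_subset 𝒴 μ hSub hCUM hX (hInter X hX Y hY) hμXY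
    _ = μ (Y ∩ X) := by rw [Set.inter_comm]
    _ = μ Y := (map_eq_map_inter_of_map_subset 𝒴 μ hSub hCUM hY (hInter Y hY X hX) hμYX).symm
end

section
/- In a smooth preferential structure (without copies) over a domain 𝒴, the minimal-elements function μ satisfies (μCum1): if μ(X₀) ⊆ U and μ(X₁) ⊆ U ∪ X₀ (for U, X₀, X₁ ∈ 𝒴), then X₀ ∩ X₁ ∩ μ(U) ⊆ μ(X₁). -/
/-!
Smoothness of `X` at `x` says that if `x` is not minimal in `X`, then some element of `μ X` lies
below it. So a point with nothing below it in some `V ⊇ μ X` is minimal in `X`. Applied to `X0`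
with `V = U`, a point of `X0 ∩ μ U` is minimal in `X0`; then nothing in `U ∪ X0 ⊇ μ X1` lies
below it, and applied to `X1` it is minimal in `X1`.
-/

theorem mem_of_smooth_of_forall_not_rel {α : Type*} {r : α → α → Prop} {M V : Set α} {x : α}
    (hsmooth : x ∈ M ∨ ∃ y ∈ M, r y x) (hMV : M ⊆ V) (hV : ∀ y ∈ V, ¬ r y x) : x ∈ M :=
  hsmooth.resolve_right fun ⟨y, hyM, hyx⟩ => hV y (hMV hyM) hyx

theorem stmt_8_general {α : Type*} (𝒴 : Set (Set α)) (r : α → α → Prop)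
    (μ : Set α → Set α)
    (hμ : ∀ X : Set α, μ X = {x ∈ X | ¬∃ y ∈ X, r y x})
    (hsmooth : ∀ X ∈ 𝒴, ∀ x ∈ X, x ∈ μ X ∨ ∃ y ∈ μ X, r y x)
    (U X0 X1 : Set α) (h0 : X0 ∈ 𝒴) (h1 : X1 ∈ 𝒴)
    (hm0 : μ X0 ⊆ U) (hm1 : μ X1 ⊆ U ∪ X0) :
    X0 ∩ X1 ∩ μ U ⊆ μ X1 := by
  rintro x ⟨⟨hx0, hx1⟩, hxU⟩
  have not_rel_of_mem_μ {X : Set α} (hx : x ∈ μ X) : ∀ y ∈ X, ¬ r y x := by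
    rw [hμ] at hx
    exact fun y hy hyx => hx.2 ⟨y, hy, hyx⟩
  have hxμ0 : x ∈ μ X0 :=
    mem_of_smooth_of_forall_not_rel (hsmooth X0 h0 x hx0) hm0 (not_rel_of_mem_μ hxU)
  exact mem_of_smooth_of_forall_not_rel (hsmooth X1 h1 x hx1) hm1 fun y hy =>
    hy.elim (not_rel_of_mem_μ hxU y) (not_rel_of_mem_μ hxμ0 y)

/-- In a smooth preferential structure, (μCum1) holds. -/
theorem stmt_8 {α : Type*} (𝒴 : Set (Set α)) (r : α → α → Prop)
    (μ : Set α → Set α)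
    (hμ : ∀ X : Set α, μ X = {x ∈ X | ¬∃ y ∈ X, r y x})
    (hsmooth : ∀ X ∈ 𝒴, ∀ x ∈ X, x ∈ μ X ∨ ∃ y ∈ μ X, r y x)
    (U X0 X1 : Set α) (hU : U ∈ 𝒴) (h0 : X0 ∈ 𝒴) (h1 : X1 ∈ 𝒴)
    (hm0 : μ X0 ⊆ U) (hm1 : μ X1 ⊆ U ∪ X0) :
    X0 ∩ X1 ∩ μ U ⊆ μ X1 :=
  stmt_8_general 𝒴 r μ hμ hsmooth U X0 X1 h0 h1 hm0 hm1
end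

section
/- In a smooth preferential structure (without copies), for every ordinal α the condition (μCumα) holds: if for all β ≤ α, μ(X_β) ⊆ U ∪ ⋃{X_γ : γ < β} (all sets in the smooth domain), then ⋂{X_γ : γ ≤ α} ∩ μ(U) ⊆ μ(X_α). -/
/-!
Induction on `α`. Let `x` lie in every `X γ` (`γ ≤ α`) and be minimal in `U`. If `x` were not
minimal in `X α`, smoothness would give a minimal `y ∈ X α` below `x`. By hypothesis `y ∈ U`,
impossible since `x` is minimal in `U`, or `y ∈ X γ` for some `γ < α`, impossible since `x` is
minimal in `X γ` by the induction hypothesis.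
-/

section

variable {M : Type*}

def prefMin (r : M → M → Prop) (X : Set M) : Set M := {x ∈ X | ¬∃ y ∈ X, r y x}

def IsSmooth (r : M → M → Prop) (X : Set M) : Prop :=
  ∀ x ∈ X, x ∈ prefMin r X ∨ ∃ y ∈ prefMin r X, r y x

lemma not_rel_of_mem_prefMin {r : M → M → Prop} {X : Set M} {x y : M}
    (hx : x ∈ prefMin r X) (hy : y ∈ X) : ¬r y x :=
  fun hyx => hx.2 ⟨y, hy, hyx⟩

lemma mem_prefMin_of_mem_prefMin_of_subset_union {r : M → M → Prop} {U V Y : Set M} {x : M}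
    (hsmooth : IsSmooth r Y) (hY : prefMin r Y ⊆ U ∪ V) (hxY : x ∈ Y)
    (hxU : x ∈ prefMin r U) (hxV : ∀ y ∈ V, ¬r y x) : x ∈ prefMin r Y := by
  obtain hx | ⟨y, hy, hyx⟩ := hsmooth x hxY
  · exact hx
  · obtain hyU | hyV := hY hy
    · exact absurd hyx (not_rel_of_mem_prefMin hxU hyU)
    · exact absurd hyx (hxV y hyV)

theorem iInter_inter_prefMin_subset_prefMin {ι : Type*} [Preorder ι] [WellFoundedLT ι]
    {r : M → M → Prop} {U : Set M} {X : ι → Set M} (a : ι)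
    (hsmooth : ∀ β ≤ a, IsSmooth r (X β))
    (hpre : ∀ β ≤ a, prefMin r (X β) ⊆ U ∪ ⋃ γ < β, X γ) :
    (⋂ γ ≤ a, X γ) ∩ prefMin r U ⊆ prefMin r (X a) := by
  induction a using WellFoundedLT.induction with
  | _ a ih =>
    rintro x ⟨hxX, hxU⟩
    simp only [Set.mem_iInter] at hxX
    refine mem_prefMin_of_mem_prefMin_of_subset_union (hsmooth a le_rfl) (hpre a le_rfl)
      (hxX a le_rfl) hxU ?_
    simp only [Set.mem_iUnion]
    rintro y ⟨γ, hγa, hyγ⟩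
    have hxγ : x ∈ prefMin r (X γ) :=
      ih γ hγa (fun β hβ => hsmooth β (hβ.trans hγa.le)) (fun β hβ => hpre β (hβ.trans hγa.le))
        ⟨Set.mem_iInter₂.2 fun δ hδ => hxX δ (hδ.trans hγa.le), hxU⟩
    exact not_rel_of_mem_prefMin hxγ hyγ

end

theorem stmt_9_general {M : Type*} (𝒴 : Set (Set M)) (r : M → M → Prop)
    (μ : Set M → Set M)
    (hμ : ∀ X : Set M, μ X = {x ∈ X | ¬∃ y ∈ X, r y x})
    (hsmooth : ∀ X ∈ 𝒴, ∀ x ∈ X, x ∈ μ X ∨ ∃ y ∈ μ X, r y x)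
    (a : Ordinal) (U : Set M) (X : Ordinal → Set M)
    (hX : ∀ β ≤ a, X β ∈ 𝒴)
    (hpre : ∀ β ≤ a, μ (X β) ⊆ U ∪ ⋃ γ < β, X γ) :
    (⋂ γ ≤ a, X γ) ∩ μ U ⊆ μ (X a) := by
  obtain rfl : μ = prefMin r := funext hμ
  exact iInter_inter_prefMin_subset_prefMin a (fun β hβ => hsmooth _ (hX β hβ)) hpre

/-- In a smooth preferential structure, (μCumα) holds for every ordinal α. -/
theorem stmt_9 {M : Type*} (𝒴 : Set (Set M)) (r : M → M → Prop)
    (μ : Set M → Set M)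
    (hμ : ∀ X : Set M, μ X = {x ∈ X | ¬∃ y ∈ X, r y x})
    (hsmooth : ∀ X ∈ 𝒴, ∀ x ∈ X, x ∈ μ X ∨ ∃ y ∈ μ X, r y x)
    (a : Ordinal) (U : Set M) (X : Ordinal → Set M)
    (hU : U ∈ 𝒴) (hX : ∀ β ≤ a, X β ∈ 𝒴)
    (hpre : ∀ β ≤ a, μ (X β) ⊆ U ∪ ⋃ γ < β, X γ) :
    (⋂ γ ≤ a, X γ) ∩ μ U ⊆ μ (X a) :=
  stmt_9_general 𝒴 r μ hμ hsmooth a U X hX hpre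
end

section
/- In a transitive smooth preferential structure (without copies), for every ordinal α the condition (μCumtα) holds: if for all β ≤ α, μ(X_β) ⊆ U ∪ ⋃{X_γ : γ < β}, then X_α ∩ μ(U) ⊆ μ(X_α). -/
/-!
Fix x ∈ X_α ∩ μ(U). By induction on β ≤ α, no element of X_β lies strictly below x: if y ∈ X_β
did, smoothness and transitivity would give some z ∈ μ(X_β) below x, and z lies either in U,
contradicting x ∈ μ(U), or in some X_γ with γ < β, contradicting the induction hypothesis.
For β = α this says x ∈ μ(X_α).
-/

namespace PreferentialStructure

variable {M : Type*} (r : M → M → Prop)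

def minimals (X : Set M) : Set M := {x ∈ X | ¬∃ y ∈ X, r y x}

def IsSmooth (X : Set M) : Prop := ∀ x ∈ X, x ∈ minimals r X ∨ ∃ y ∈ minimals r X, r y x

variable {r}

theorem IsSmooth.exists_mem_minimals_rel [IsTrans M r] {X : Set M}
    (hX : IsSmooth r X) {x y : M} (hy : y ∈ X) (hyx : r y x) :
    ∃ z ∈ minimals r X, r z x := by
  rcases hX y hy with hmin | ⟨z, hz, hzy⟩
  · exact ⟨y, hmin, hyx⟩
  · exact ⟨z, hz, _root_.trans_of r hzy hyx⟩

theorem not_rel_of_mem_of_cumulative {ι : Type*} [Preorder ι] [WellFoundedLT ι]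
    [IsTrans M r] {U : Set M} {X : ι → Set M} {a : ι}
    (hX : ∀ β ≤ a, IsSmooth r (X β))
    (hcum : ∀ β ≤ a, minimals r (X β) ⊆ U ∪ ⋃ γ < β, X γ)
    {x : M} (hx : x ∈ minimals r U) :
    ∀ β ≤ a, ∀ y ∈ X β, ¬r y x := by
  intro β
  induction β using WellFoundedLT.induction with
  | ind β ih =>
    intro hβ y hy hyx
    obtain ⟨z, hz, hzx⟩ := (hX β hβ).exists_mem_minimals_rel hy hyx
    rcases hcum β hβ hz with hzU | hzX
    · exact hx.2 ⟨z, hzU, hzx⟩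
    · obtain ⟨γ, hγβ, hzγ⟩ := Set.mem_iUnion₂.mp hzX
      exact ih γ hγβ (hγβ.le.trans hβ) z hzγ hzx

theorem inter_minimals_subset_of_cumulative {ι : Type*} [Preorder ι] [WellFoundedLT ι]
    [IsTrans M r] {U : Set M} {X : ι → Set M} {a : ι}
    (hX : ∀ β ≤ a, IsSmooth r (X β))
    (hcum : ∀ β ≤ a, minimals r (X β) ⊆ U ∪ ⋃ γ < β, X γ) :
    X a ∩ minimals r U ⊆ minimals r (X a) :=
  fun _ ⟨hxX, hxU⟩ ↦ ⟨hxX, fun ⟨y, hy, hyx⟩ ↦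
    not_rel_of_mem_of_cumulative hX hcum hxU a le_rfl y hy hyx⟩

end PreferentialStructure

open PreferentialStructure in
theorem stmt_10_general {M : Type*} (𝒴 : Set (Set M)) (r : M → M → Prop)
    (htrans : Transitive r)
    (μ : Set M → Set M)
    (hμ : ∀ X : Set M, μ X = {x ∈ X | ¬∃ y ∈ X, r y x})
    (hsmooth : ∀ X ∈ 𝒴, ∀ x ∈ X, x ∈ μ X ∨ ∃ y ∈ μ X, r y x)
    (a : Ordinal) (U : Set M) (X : Ordinal → Set M)
    (hX : ∀ β ≤ a, X β ∈ 𝒴)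
    (hpre : ∀ β ≤ a, μ (X β) ⊆ U ∪ ⋃ γ < β, X γ) :
    X a ∩ μ U ⊆ μ (X a) := by
  obtain rfl : μ = minimals r := funext hμ
  have : IsTrans M r := ⟨fun _ _ _ ↦ @htrans _ _ _⟩
  exact inter_minimals_subset_of_cumulative (fun β hβ ↦ hsmooth _ (hX β hβ)) hpre

/-- In a transitive smooth preferential structure, (μCumtα) holds for every ordinal α. -/
theorem stmt_10 {M : Type*} (𝒴 : Set (Set M)) (r : M → M → Prop)
    (htrans : Transitive r)
    (μ : Set M → Set M)
    (hμ : ∀ X : Set M, μ X = {x ∈ X | ¬∃ y ∈ X, r y x})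
    (hsmooth : ∀ X ∈ 𝒴, ∀ x ∈ X, x ∈ μ X ∨ ∃ y ∈ μ X, r y x)
    (a : Ordinal) (U : Set M) (X : Ordinal → Set M)
    (hU : U ∈ 𝒴) (hX : ∀ β ≤ a, X β ∈ 𝒴)
    (hpre : ∀ β ≤ a, μ (X β) ⊆ U ∪ ⋃ γ < β, X γ) :
    X a ∩ μ U ⊆ μ (X a) :=
  stmt_10_general 𝒴 r htrans μ hμ hsmooth a U X hX hpre
end

section
/- In a transitive smooth preferential structure, if μ(X_β) ⊆ U ∪ ⋃{X_γ : γ < β} for all β ≤ α and x ∈ μ(U), then there is no y ≺ x with y ∈ U ∪ ⋃{X_γ : γ ≤ α}. -/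
/-!
Let `D` be the set of elements strictly below `x`; by transitivity it is closed downwards. If a
set is smooth, every element of it lies in or above its minimal part, so it meets `D` only if its
minimal part does. Since `x` is minimal in `U`, `U` misses `D`, and by well-founded induction on
`β` each `μ (X β)` lies in `U ∪ ⋃ γ < β, X γ`, which misses `D`, so `X β` misses `D` as well.
-/

section

variable {M : Type*} {r : M → M → Prop}

def Dominates (r : M → M → Prop) (m X : Set M) : Prop :=
  ∀ y ∈ X, y ∈ m ∨ ∃ z ∈ m, r z y

theorem Dominates.disjoint {m X D : Set M} (hX : Dominates r m X)
    (hD : ∀ ⦃y z⦄, r z y → y ∈ D → z ∈ D) (hm : Disjoint m D) : Disjoint X D := by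
  refine Set.disjoint_left.2 fun y hyX hyD => ?_
  rcases hX y hyX with hym | ⟨z, hzm, hzy⟩
  · exact Set.disjoint_left.1 hm hym hyD
  · exact Set.disjoint_left.1 hm hzm (hD hzy hyD)

theorem disjoint_of_dominates_of_subset_iUnion_lt {ι : Type*} [Preorder ι] [WellFoundedLT ι]
    {μ : Set M → Set M} {U D : Set M} {X : ι → Set M} {a : ι}
    (hX : ∀ β ≤ a, Dominates r (μ (X β)) (X β))
    (hpre : ∀ β ≤ a, μ (X β) ⊆ U ∪ ⋃ γ < β, X γ)
    (hD : ∀ ⦃y z⦄, r z y → y ∈ D → z ∈ D) (hU : Disjoint U D) :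
    ∀ β ≤ a, Disjoint (X β) D := by
  intro β
  induction β using WellFoundedLT.induction with
  | _ β ih =>
    intro hβ
    have hlt : Disjoint (⋃ γ < β, X γ) D :=
      Set.disjoint_iUnion₂_left.2 fun γ hγ => ih γ hγ (hγ.le.trans hβ)
    exact (hX β hβ).disjoint hD ((Disjoint.union_left hU hlt).mono_left (hpre β hβ))

end

theorem stmt_11_general {M : Type*} (𝒴 : Set (Set M)) (r : M → M → Prop)
    (htrans : Transitive r)
    (μ : Set M → Set M)
    (hμ : ∀ X : Set M, μ X = {x ∈ X | ¬∃ y ∈ X, r y x})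
    (hsmooth : ∀ X ∈ 𝒴, ∀ x ∈ X, x ∈ μ X ∨ ∃ y ∈ μ X, r y x)
    (a : Ordinal) (U : Set M) (X : Ordinal → Set M)
    (hX : ∀ β ≤ a, X β ∈ 𝒴)
    (hpre : ∀ β ≤ a, μ (X β) ⊆ U ∪ ⋃ γ < β, X γ)
    (x : M) (hx : x ∈ μ U) :
    ¬∃ y, r y x ∧ y ∈ U ∪ ⋃ γ ≤ a, X γ := by
  set D := {y | r y x}
  have hD : ∀ ⦃y z⦄, r z y → y ∈ D → z ∈ D := fun _ _ hzy hyx => htrans hzy hyx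
  have hU : Disjoint U D := by
    rw [hμ] at hx
    exact Set.disjoint_left.2 fun y hyU hyx => hx.2 ⟨y, hyU, hyx⟩
  have hXD := disjoint_of_dominates_of_subset_iUnion_lt
    (fun β hβ => hsmooth (X β) (hX β hβ)) hpre hD hU
  rintro ⟨y, hyx, hy⟩
  exact Set.disjoint_right.1 (hU.union_left (Set.disjoint_iUnion₂_left.2 hXD)) hyx hy

/-- In a transitive smooth preferential structure, no element of μ(U) has a
    ≺-smaller element in U ∪ ⋃{X_γ : γ ≤ α}, under the (μCumα)-style prerequisites. -/
theorem stmt_11 {M : Type*} (𝒴 : Set (Set M)) (r : M → M → Prop)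
    (htrans : Transitive r)
    (μ : Set M → Set M)
    (hμ : ∀ X : Set M, μ X = {x ∈ X | ¬∃ y ∈ X, r y x})
    (hsmooth : ∀ X ∈ 𝒴, ∀ x ∈ X, x ∈ μ X ∨ ∃ y ∈ μ X, r y x)
    (a : Ordinal) (U : Set M) (X : Ordinal → Set M)
    (hU : U ∈ 𝒴) (hX : ∀ β ≤ a, X β ∈ 𝒴)
    (hpre : ∀ β ≤ a, μ (X β) ⊆ U ∪ ⋃ γ < β, X γ)
    (x : M) (hx : x ∈ μ U) :
    ¬∃ y, r y x ∧ y ∈ U ∪ ⋃ γ ≤ a, X γ :=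
  stmt_11_general 𝒴 r htrans μ hμ hsmooth a U X hX hpre x hx
end

section
/- For ordinals β ≤ α, if μ satisfies (μ⊆), (μPR) and (μCumα), then μ satisfies (μCumβ). -/
/-! Freezing a family `X` at `b`, i.e. passing to `γ ↦ X (min γ b)`, turns an instance of
(μCum b) into an instance of (μCum a) with the same conclusion, since `X (min a b) = X b`. -/

section Truncation

variable {ι α : Type*} [LinearOrder ι]

theorem biUnion_lt_min_subset_biUnion_lt (X : ι → Set α) (β b : ι) :
    ⋃ γ < min β b, X γ ⊆ ⋃ γ < β, X (min γ b) := by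
  refine Set.iUnion₂_subset fun γ hγ => ?_
  rw [lt_min_iff] at hγ
  exact Set.subset_iUnion₂_of_subset γ hγ.1 (by rw [min_eq_left hγ.2.le])

theorem biInter_le_subset_min (X : ι → Set α) (b γ : ι) : ⋂ δ ≤ b, X δ ⊆ X (min γ b) :=
  Set.biInter_subset_of_mem (min_le_right γ b)

theorem subset_union_biUnion_lt_min {μ : Set α → Set α} {U : Set α} {X : ι → Set α} {b : ι}
    (hμ : ∀ β ≤ b, μ (X β) ⊆ U ∪ ⋃ γ < β, X γ) (β : ι) :
    μ (X (min β b)) ⊆ U ∪ ⋃ γ < β, X (min γ b) :=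
  (hμ _ (min_le_right β b)).trans <|
    Set.union_subset_union_right U (biUnion_lt_min_subset_biUnion_lt X β b)

end Truncation

theorem stmt_12_general {α : Type*} (𝒴 : Set (Set α)) (μ : Set α → Set α)
    (a b : Ordinal) (hba : b ≤ a)
    (hCuma : ∀ (U : Set α) (X : Ordinal → Set α), U ∈ 𝒴 → (∀ γ ≤ a, X γ ∈ 𝒴) →
      (∀ β ≤ a, μ (X β) ⊆ U ∪ ⋃ γ < β, X γ) →
      (⋂ γ ≤ a, X γ) ∩ μ U ⊆ μ (X a)) :
    ∀ (U : Set α) (X : Ordinal → Set α), U ∈ 𝒴 → (∀ γ ≤ b, X γ ∈ 𝒴) →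
      (∀ β ≤ b, μ (X β) ⊆ U ∪ ⋃ γ < β, X γ) →
      (⋂ γ ≤ b, X γ) ∩ μ U ⊆ μ (X b) := by
  intro U X hU hX hμ
  have hCum := hCuma U (fun γ => X (min γ b)) hU (fun γ _ => hX _ (min_le_right γ b))
    (fun β _ => subset_union_biUnion_lt_min hμ β)
  rw [min_eq_right hba] at hCum
  exact (Set.inter_subset_inter_left _
    (Set.subset_iInter₂ fun γ _ => biInter_le_subset_min X b γ)).trans hCum

/-- For ordinals b ≤ a, (μ⊆) + (μPR) + (μCum a) imply (μCum b). -/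
theorem stmt_12 {α : Type*} (𝒴 : Set (Set α)) (μ : Set α → Set α)
    (a b : Ordinal) (hba : b ≤ a)
    (hSub : ∀ X ∈ 𝒴, μ X ⊆ X)
    (hPR : ∀ X ∈ 𝒴, ∀ Y ∈ 𝒴, X ⊆ Y → μ Y ∩ X ⊆ μ X)
    (hCuma : ∀ (U : Set α) (X : Ordinal → Set α), U ∈ 𝒴 → (∀ γ ≤ a, X γ ∈ 𝒴) →
      (∀ β ≤ a, μ (X β) ⊆ U ∪ ⋃ γ < β, X γ) →
      (⋂ γ ≤ a, X γ) ∩ μ U ⊆ μ (X a)) :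
    ∀ (U : Set α) (X : Ordinal → Set α), U ∈ 𝒴 → (∀ γ ≤ b, X γ ∈ 𝒴) →
      (∀ β ≤ b, μ (X β) ⊆ U ∪ ⋃ γ < β, X γ) →
      (⋂ γ ≤ b, X γ) ∩ μ U ⊆ μ (X b) :=
  stmt_12_general 𝒴 μ a b hba hCuma
end

section
/- If μ satisfies (μ⊆), (μPR) and (μCUM), and the domain is closed under finite unions, then μ(A) ⊆ B implies μ(A ∪ B) = μ(B). -/
theorem mu_union_subset_right {α : Type*} (μ : Set α → Set α) {A B : Set α}
    (hSub : μ (A ∪ B) ⊆ A ∪ B) (hPR : μ (A ∪ B) ∩ A ⊆ μ A) (hAB : μ A ⊆ B) :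
    μ (A ∪ B) ⊆ B := by
  intro x hx
  rcases hSub hx with hxA | hxB
  · exact hAB (hPR ⟨hx, hxA⟩)
  · exact hxB

/-- (μ⊆) + (μPR) + (μCUM) + closure under finite unions: μ(A) ⊆ B implies μ(A ∪ B) = μ(B). -/
theorem stmt_14 {α : Type*} (𝒴 : Set (Set α)) (μ : Set α → Set α)
    (hUnion : ∀ X ∈ 𝒴, ∀ Y ∈ 𝒴, X ∪ Y ∈ 𝒴)
    (hSub : ∀ X ∈ 𝒴, μ X ⊆ X)
    (hPR : ∀ X ∈ 𝒴, ∀ Y ∈ 𝒴, X ⊆ Y → μ Y ∩ X ⊆ μ X)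
    (hCUM : ∀ X ∈ 𝒴, ∀ Y ∈ 𝒴, μ X ⊆ Y → Y ⊆ X → μ X = μ Y) :
    ∀ A ∈ 𝒴, ∀ B ∈ 𝒴, μ A ⊆ B → μ (A ∪ B) = μ B := by
  intro A hA B hB hAB
  have hAB𝒴 : A ∪ B ∈ 𝒴 := hUnion A hA B hB
  have hμAB : μ (A ∪ B) ⊆ B :=
    mu_union_subset_right μ (hSub _ hAB𝒴) (hPR A hA _ hAB𝒴 Set.subset_union_left) hAB
  exact hCUM _ hAB𝒴 B hB hμAB Set.subset_union_right
end

section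
/- If μ satisfies (μ⊆), (μPR) and (μCUM), and the domain is closed under finite unions, then μ(X) ⊆ U and U ⊆ Y imply μ(Y) ∩ X ⊆ μ(U). -/
/-! The point is that `μ (X ∪ U) = μ U` whenever `μ X ⊆ U`: by (μPR) the part of `μ (X ∪ U)`
lying in `X` is inside `μ X ⊆ U`, so `μ (X ∪ U) ⊆ U ⊆ X ∪ U` and (μCUM) applies. Using this for
`U` and for `Y`, the claim becomes (μPR) for `X ∪ U ⊆ X ∪ Y`. -/

section Preferential

variable {α : Type*} {𝒴 : Set (Set α)} {μ : Set α → Set α}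

theorem mu_union_subset_of_mu_subset
    (hSub : ∀ X ∈ 𝒴, μ X ⊆ X)
    (hPR : ∀ X ∈ 𝒴, ∀ Y ∈ 𝒴, X ⊆ Y → μ Y ∩ X ⊆ μ X)
    {X U : Set α} (hX : X ∈ 𝒴) (hXU : X ∪ U ∈ 𝒴) (h : μ X ⊆ U) :
    μ (X ∪ U) ⊆ U := by
  intro x hx
  rcases hSub _ hXU hx with hxX | hxU
  · exact h (hPR X hX _ hXU Set.subset_union_left ⟨hx, hxX⟩)
  · exact hxU

theorem mu_union_eq_of_mu_subset
    (hSub : ∀ X ∈ 𝒴, μ X ⊆ X)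
    (hPR : ∀ X ∈ 𝒴, ∀ Y ∈ 𝒴, X ⊆ Y → μ Y ∩ X ⊆ μ X)
    (hCUM : ∀ X ∈ 𝒴, ∀ Y ∈ 𝒴, μ X ⊆ Y → Y ⊆ X → μ X = μ Y)
    {X U : Set α} (hX : X ∈ 𝒴) (hU : U ∈ 𝒴) (hXU : X ∪ U ∈ 𝒴) (h : μ X ⊆ U) :
    μ (X ∪ U) = μ U :=
  hCUM _ hXU U hU (mu_union_subset_of_mu_subset hSub hPR hX hXU h) Set.subset_union_right

end Preferential

/-- (μ⊆) + (μPR) + (μCUM) + closure under finite unions: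
    μ(X) ⊆ U and U ⊆ Y imply μ(Y) ∩ X ⊆ μ(U). -/
theorem stmt_15 {α : Type*} (𝒴 : Set (Set α)) (μ : Set α → Set α)
    (hUnion : ∀ X ∈ 𝒴, ∀ Y ∈ 𝒴, X ∪ Y ∈ 𝒴)
    (hSub : ∀ X ∈ 𝒴, μ X ⊆ X)
    (hPR : ∀ X ∈ 𝒴, ∀ Y ∈ 𝒴, X ⊆ Y → μ Y ∩ X ⊆ μ X)
    (hCUM : ∀ X ∈ 𝒴, ∀ Y ∈ 𝒴, μ X ⊆ Y → Y ⊆ X → μ X = μ Y) :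
    ∀ X ∈ 𝒴, ∀ U ∈ 𝒴, ∀ Y ∈ 𝒴, μ X ⊆ U → U ⊆ Y → μ Y ∩ X ⊆ μ U := by
  intro X hX U hU Y hY hXU hUY
  have hμXY : μ (X ∪ Y) = μ Y :=
    mu_union_eq_of_mu_subset hSub hPR hCUM hX hY (hUnion X hX Y hY) (hXU.trans hUY)
  have hμXU : μ (X ∪ U) = μ U :=
    mu_union_eq_of_mu_subset hSub hPR hCUM hX hU (hUnion X hX U hU) hXU
  rintro x ⟨hxY, hxX⟩
  rw [← hμXU]
  rw [← hμXY] at hxY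
  exact hPR _ (hUnion X hX U hU) _ (hUnion X hX Y hY) (Set.union_subset_union_right X hUY)
    ⟨hxY, Or.inl hxX⟩
end

section
/- If μ satisfies (μ⊆), (μPR) and (μCum0), then μ satisfies (μCUM): μ(X) ⊆ U ⊆ X implies μ(X) = μ(U). -/
/-- (μ⊆) + (μPR) + (μCum0) imply (μCUM). -/
theorem stmt_16 {α : Type*} (𝒴 : Set (Set α)) (μ : Set α → Set α)
    (hSub : ∀ X ∈ 𝒴, μ X ⊆ X)
    (hPR : ∀ X ∈ 𝒴, ∀ Y ∈ 𝒴, X ⊆ Y → μ Y ∩ X ⊆ μ X)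
    (hCum0 : ∀ X ∈ 𝒴, ∀ U ∈ 𝒴, μ X ⊆ U → X ∩ μ U ⊆ μ X) :
    ∀ X ∈ 𝒴, ∀ U ∈ 𝒴, μ X ⊆ U → U ⊆ X → μ X = μ U := by
  intro X hX U hU hμX hUX
  apply Set.Subset.antisymm
  · exact (Set.subset_inter subset_rfl hμX).trans (hPR U hU X hX hUX)
  · exact (Set.subset_inter ((hSub U hU).trans hUX) subset_rfl).trans (hCum0 X hX U hU hμX)
end

section
/- If μ satisfies (μ⊆), (μPR) and (μCUM), and the domain is closed under finite unions, then μ satisfies (μCumtα) for every ordinal α: if μ(X_β) ⊆ U ∪ ⋃{X_γ : γ < β} for all β ≤ α, then X_α ∩ μ(U) ⊆ μ(X_α). -/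
/-!
For finite `T` below `β` put `Y_T = U ∪ ⋃_{γ ∈ T} X_γ`. By well-founded induction on `β` one shows
`μ(Y_T) = μ(U)`, and then also `μ(U ∪ X_β ∪ Y_T) = μ(U)`: by (μPR) and the induction hypothesis
`μ(U ∪ X_β ∪ Y_T) ⊆ U ∪ X_β`, so by (μCUM) this set does not change when `T` grows; a point of it
outside `U` lies in `μ(X_β)`, hence in some `X_γ` with `γ < β`, and after adding `γ` to `T`,
(μPR) puts it in `μ(Y_{T ∪ {γ}}) = μ(U) ⊆ U`. Then (μCUM) gives `μ(U ∪ X_β ∪ Y_T) = μ(U)`.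
For `T = ∅` this is `μ(U ∪ X_β) = μ(U)`, and (μPR) turns it into `X_β ∩ μ(U) ⊆ μ(X_β)`.
-/

open Set

structure CumulativeChoice {α : Type*} (𝒴 : Set (Set α)) (μ : Set α → Set α) : Prop where
  union_mem : ∀ X ∈ 𝒴, ∀ Y ∈ 𝒴, X ∪ Y ∈ 𝒴
  mu_subset : ∀ X ∈ 𝒴, μ X ⊆ X
  pr : ∀ X ∈ 𝒴, ∀ Y ∈ 𝒴, X ⊆ Y → μ Y ∩ X ⊆ μ X
  cum : ∀ X ∈ 𝒴, ∀ Y ∈ 𝒴, μ X ⊆ Y → Y ⊆ X → μ X = μ Y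

namespace CumulativeChoice

variable {α : Type*} {𝒴 : Set (Set α)} {μ : Set α → Set α} {U B W W' : Set α}

theorem union_finsetSup_mem {ι : Type*} (h : CumulativeChoice 𝒴 μ) (hU : U ∈ 𝒴)
    {X : ι → Set α} {T : Finset ι} (hX : ∀ i ∈ T, X i ∈ 𝒴) : U ∪ T.sup X ∈ 𝒴 :=
  Finset.sup_induction (p := fun V => U ∪ V ∈ 𝒴) (by simpa using hU)
    (fun V₁ h₁ V₂ h₂ => by
      show U ∪ (V₁ ∪ V₂) ∈ 𝒴
      rw [union_union_distrib_left]
      exact h.union_mem _ h₁ _ h₂)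
    (fun i hi => h.union_mem _ hU _ (hX i hi))

theorem union_union_mem (h : CumulativeChoice 𝒴 μ) (hB : B ∈ 𝒴) (hUW : U ∪ W ∈ 𝒴) :
    U ∪ (B ∪ W) ∈ 𝒴 := by
  rw [union_left_comm, union_comm]
  exact h.union_mem _ hUW _ hB

theorem mu_union_union_subset (h : CumulativeChoice 𝒴 μ) (hU : U ∈ 𝒴) (hB : B ∈ 𝒴)
    (hUW : U ∪ W ∈ 𝒴) (hμW : μ (U ∪ W) = μ U) : μ (U ∪ (B ∪ W)) ⊆ U ∪ B := by
  intro x hx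
  by_cases hxB : x ∈ B
  · exact Or.inr hxB
  have hxUW : x ∈ U ∪ W := by
    have := h.mu_subset _ (h.union_union_mem hB hUW) hx
    simp only [mem_union] at this ⊢
    tauto
  have hsub : U ∪ W ⊆ U ∪ (B ∪ W) := union_subset_union_right U subset_union_right
  have := h.pr _ hUW _ (h.union_union_mem hB hUW) hsub ⟨hx, hxUW⟩
  rw [hμW] at this
  exact Or.inl (h.mu_subset U hU this)

theorem mu_union_union_eq_of_subset (h : CumulativeChoice 𝒴 μ) (hU : U ∈ 𝒴) (hB : B ∈ 𝒴)
    (hUW : U ∪ W ∈ 𝒴) (hUW' : U ∪ W' ∈ 𝒴) (hμW' : μ (U ∪ W') = μ U) (hWW' : W ⊆ W') :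
    μ (U ∪ (B ∪ W')) = μ (U ∪ (B ∪ W)) :=
  h.cum _ (h.union_union_mem hB hUW') _ (h.union_union_mem hB hUW)
    ((h.mu_union_union_subset hU hB hUW' hμW').trans
      (union_subset_union_right U subset_union_left))
    (union_subset_union_right U (union_subset_union_right B hWW'))

theorem mu_union_union_eq (h : CumulativeChoice 𝒴 μ) {𝒲 : Set (Set α)} (hU : U ∈ 𝒴)
    (hB : B ∈ 𝒴) (h𝒲 : ∀ W ∈ 𝒲, U ∪ W ∈ 𝒴 ∧ μ (U ∪ W) = μ U)
    (h𝒲_union : ∀ W₁ ∈ 𝒲, ∀ W₂ ∈ 𝒲, W₁ ∪ W₂ ∈ 𝒲) (hμB : μ B ⊆ U ∪ ⋃₀ 𝒲) (hW : W ∈ 𝒲) :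
    μ (U ∪ (B ∪ W)) = μ U := by
  obtain ⟨hUW, hμW⟩ := h𝒲 W hW
  have hZ := h.union_union_mem hB hUW
  refine h.cum _ hZ _ hU ?_ subset_union_left
  intro x hx
  by_contra hxU
  have hxB : x ∈ B := (h.mu_union_union_subset hU hB hUW hμW hx).resolve_left hxU
  have hxμB : x ∈ μ B :=
    h.pr _ hB _ hZ (subset_union_left.trans subset_union_right) ⟨hx, hxB⟩
  obtain ⟨W₂, hW₂, hxW₂⟩ := (hμB hxμB).resolve_left hxU
  obtain ⟨hUW', hμW'⟩ := h𝒲 _ (h𝒲_union W hW W₂ hW₂)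
  rw [← h.mu_union_union_eq_of_subset hU hB hUW hUW' hμW' subset_union_left] at hx
  have := h.pr _ hUW' _ (h.union_union_mem hB hUW') (union_subset_union_right U subset_union_right)
    ⟨hx, Or.inr (Or.inr hxW₂)⟩
  rw [hμW'] at this
  exact hxU (h.mu_subset U hU this)

section WellOrdered

variable {ι : Type*} [LinearOrder ι] {X : ι → Set α}

theorem mu_union_union_finsetSup_eq (h : CumulativeChoice 𝒴 μ) (hU : U ∈ 𝒴)
    (hX : ∀ i, X i ∈ 𝒴) (hμX : ∀ β, μ (X β) ⊆ U ∪ ⋃ γ < β, X γ) {β : ι}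
    (hβ : ∀ T : Finset ι, (∀ γ ∈ T, γ < β) → μ (U ∪ T.sup X) = μ U)
    {T : Finset ι} (hT : ∀ γ ∈ T, γ < β) :
    μ (U ∪ (X β ∪ T.sup X)) = μ U := by
  refine h.mu_union_union_eq (𝒲 := (Finset.sup · X) '' {T | ∀ γ ∈ T, γ < β}) hU (hX β)
    ?_ ?_ ?_ ⟨T, hT, rfl⟩
  · rintro _ ⟨T', hT', rfl⟩
    exact ⟨h.union_finsetSup_mem hU fun i _ => hX i, hβ T' hT'⟩
  · rintro _ ⟨T₁, hT₁, rfl⟩ _ ⟨T₂, hT₂, rfl⟩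
    refine ⟨T₁ ∪ T₂, fun γ hγ => ?_, Finset.sup_union⟩
    rcases Finset.mem_union.1 hγ with hγ | hγ
    exacts [hT₁ γ hγ, hT₂ γ hγ]
  · refine (hμX β).trans (union_subset_union_right U (iUnion₂_subset fun γ hγ => ?_))
    exact subset_sUnion_of_mem ⟨{γ}, by simpa using hγ, Finset.sup_singleton⟩

theorem mu_union_finsetSup_eq [WellFoundedLT ι] (h : CumulativeChoice 𝒴 μ) (hU : U ∈ 𝒴)
    (hX : ∀ i, X i ∈ 𝒴) (hμX : ∀ β, μ (X β) ⊆ U ∪ ⋃ γ < β, X γ) (β : ι) (T : Finset ι)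
    (hT : ∀ γ ∈ T, γ < β) : μ (U ∪ T.sup X) = μ U := by
  induction β using WellFoundedLT.induction generalizing T with | _ β ih
  induction T using Finset.induction_on_max with
  | empty => simp
  | insert m E hE _ =>
    rw [Finset.sup_insert]
    exact h.mu_union_union_finsetSup_eq hU hX hμX (ih m (hT m (Finset.mem_insert_self m E))) hE

theorem mu_union_eq [WellFoundedLT ι] (h : CumulativeChoice 𝒴 μ) (hU : U ∈ 𝒴)
    (hX : ∀ i, X i ∈ 𝒴) (hμX : ∀ β, μ (X β) ⊆ U ∪ ⋃ γ < β, X γ) (β : ι) :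
    μ (U ∪ X β) = μ U := by
  simpa using h.mu_union_union_finsetSup_eq hU hX hμX (h.mu_union_finsetSup_eq hU hX hμX β)
    (T := ∅) (by simp)

theorem inter_mu_subset [WellFoundedLT ι] (h : CumulativeChoice 𝒴 μ) (hU : U ∈ 𝒴)
    (hX : ∀ i, X i ∈ 𝒴) (hμX : ∀ β, μ (X β) ⊆ U ∪ ⋃ γ < β, X γ) (β : ι) :
    X β ∩ μ U ⊆ μ (X β) := by
  rw [← h.mu_union_eq hU hX hμX β, inter_comm]
  exact h.pr _ (hX β) _ (h.union_mem _ hU _ (hX β)) subset_union_right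

end WellOrdered

end CumulativeChoice

/-- (μ⊆) + (μPR) + (μCUM) + closure under finite unions imply (μCumtα) for every ordinal α. -/
theorem stmt_17 {α : Type*} (𝒴 : Set (Set α)) (μ : Set α → Set α)
    (hUnion : ∀ X ∈ 𝒴, ∀ Y ∈ 𝒴, X ∪ Y ∈ 𝒴)
    (hSub : ∀ X ∈ 𝒴, μ X ⊆ X)
    (hPR : ∀ X ∈ 𝒴, ∀ Y ∈ 𝒴, X ⊆ Y → μ Y ∩ X ⊆ μ X)
    (hCUM : ∀ X ∈ 𝒴, ∀ Y ∈ 𝒴, μ X ⊆ Y → Y ⊆ X → μ X = μ Y) :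
    ∀ (a : Ordinal) (U : Set α) (X : Ordinal → Set α), U ∈ 𝒴 → (∀ γ ≤ a, X γ ∈ 𝒴) →
      (∀ β ≤ a, μ (X β) ⊆ U ∪ ⋃ γ < β, X γ) →
      X a ∩ μ U ⊆ μ (X a) := by
  intro a U X hU hX hμX
  have h : CumulativeChoice 𝒴 μ := ⟨hUnion, hSub, hPR, hCUM⟩
  let Y : Iic a → Set α := fun β => X β
  have hμY : ∀ β, μ (Y β) ⊆ U ∪ ⋃ γ < β, Y γ := by
    rintro ⟨β, hβ⟩ x hx
    obtain hxU | hx := hμX β hβ hx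
    · exact Or.inl hxU
    obtain ⟨γ, hγ, hxγ⟩ := mem_iUnion₂.1 hx
    exact Or.inr (mem_iUnion₂.2 ⟨⟨γ, hγ.le.trans hβ⟩, hγ, hxγ⟩)
  exact h.inter_mu_subset (X := Y) hU (fun β => hX β β.2) hμY ⟨a, self_mem_Iic⟩
end

section
/- If μ satisfies (μ⊆), (μPR), (μCUM), and the domain is closed under finite intersections, then μ satisfies (μCum0): μ(X) ⊆ U implies X ∩ μ(U) ⊆ μ(X). -/
/-- (μ⊆) + (μPR) + (μCUM) + closure under finite intersections imply (μCum0). -/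
theorem stmt_18 {α : Type*} (𝒴 : Set (Set α)) (μ : Set α → Set α)
    (hInter : ∀ X ∈ 𝒴, ∀ Y ∈ 𝒴, X ∩ Y ∈ 𝒴)
    (hSub : ∀ X ∈ 𝒴, μ X ⊆ X)
    (hPR : ∀ X ∈ 𝒴, ∀ Y ∈ 𝒴, X ⊆ Y → μ Y ∩ X ⊆ μ X)
    (hCUM : ∀ X ∈ 𝒴, ∀ Y ∈ 𝒴, μ X ⊆ Y → Y ⊆ X → μ X = μ Y) :
    ∀ X ∈ 𝒴, ∀ U ∈ 𝒴, μ X ⊆ U → X ∩ μ U ⊆ μ X := by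
  intro X hX U hU hμXU
  have hXU : X ∩ U ∈ 𝒴 := hInter X hX U hU
  have hμ_eq : μ X = μ (X ∩ U) :=
    hCUM X hX (X ∩ U) hXU (Set.subset_inter (hSub X hX) hμXU) Set.inter_subset_left
  rw [hμ_eq]
  calc X ∩ μ U ⊆ μ U ∩ (X ∩ U) := fun x hx => ⟨hx.2, hx.1, hSub U hU hx.2⟩
    _ ⊆ μ (X ∩ U) := hPR (X ∩ U) hXU U hU Set.inter_subset_right
end
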